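/- arXiv:2105.02910 — 3 statements merged into one kernel-verified Lean document; each statement's English description precedes it below -/
import Mathlib

section
/- A connected graph G with DFS tree T rooted at r is 2-edge-connected if and only if for every vertex v ≠ r the set B(v) of back-edges covering the tree-edge (v, p(v)) is nonempty. -/
variable {V E : Type}

/-- Reachability in the multigraph with edge-endpoint map `ends`,
avoiding (i.e. after deleting) the edges in `S`. -/
def Reach (ends : E → V × V) (S : Set E) : V → V → Prop :=
  Relation.ReflTransGen (fun a b => ∃ e, e ∉ S ∧ (ends e = (a, b) ∨ ends e = (b, a)))

/-- The multigraph is connected. -/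
def Connected (ends : E → V × V) : Prop := ∀ u v : V, Reach ends ∅ u v

/-- `u` and `v` are `k`-edge-connected: no set of at most `k - 1` edges separates them. -/
def KConn (ends : E → V × V) (k : ℕ) (u v : V) : Prop :=
  ∀ S : Finset E, S.card ≤ k - 1 → Reach ends (↑S) u v

/-- The multigraph is `k`-edge-connected: no edge cut of size less than `k`. -/
def GraphKConn (ends : E → V × V) (k : ℕ) : Prop :=
  ∀ S : Finset E, S.card < k → ∀ u v : V, Reach ends (↑S) u v

/-- `S` is an edge cut: removing it disconnects the graph. -/
def IsCutSet (ends : E → V × V) (S : Set E) : Prop :=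
  ∃ u v : V, ¬ Reach ends S u v

/-- A (candidate) DFS tree on the multigraph `ends : E → V × V`: a root, a parent
function, a choice of a tree edge for each non-root vertex, and a preorder numbering. -/
structure DFSTree (V E : Type) where
  ends : E → V × V
  root : V
  parent : V → V
  treeEdge : V → E
  pre : V → ℕ

namespace DFSTree

variable (t : DFSTree V E)

/-- `t.Anc a b` : `a` is an ancestor of `b` (every vertex is an ancestor of itself). -/
def Anc (a b : V) : Prop :=
  Relation.ReflTransGen (fun x y => x ≠ t.root ∧ y = t.parent x) b a

/-- `a` is a proper ancestor of `b`. -/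
def ProperAnc (a b : V) : Prop := t.Anc a b ∧ a ≠ b

def IsTreeEdge (e : E) : Prop := ∃ v, v ≠ t.root ∧ e = t.treeEdge v

/-- The set `B(v)`: back-edges `(x, y)` with `x` a descendant of `v` and `y` a
proper ancestor of `v`. -/
def B (v : V) : Set E :=
  {e | ¬ t.IsTreeEdge e ∧ t.Anc v (t.ends e).1 ∧ t.ProperAnc (t.ends e).2 v}

/-- `m` is the nearest common ancestor of the set `S` of vertices. -/
def IsNCA (S : Set V) (m : V) : Prop :=
  (∀ x ∈ S, t.Anc m x) ∧ ∀ m' : V, (∀ x ∈ S, t.Anc m' x) → t.Anc m' m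

/-- `m = M(v)`: the nearest common ancestor of all lower ends of back-edges in `B(v)`. -/
def IsM (v m : V) : Prop := t.IsNCA {x | ∃ e ∈ t.B v, (t.ends e).1 = x} m

/-- `h = high(v)`: the highest (in preorder) upper end of a back-edge in `B(v)`. -/
def IsHigh (v h : V) : Prop :=
  (∃ e ∈ t.B v, (t.ends e).2 = h) ∧ ∀ e ∈ t.B v, t.pre (t.ends e).2 ≤ t.pre h

/-- `l = low(v)`: the lowest (in preorder) upper end of a back-edge in `B(v)`. -/
def IsLow (v l : V) : Prop :=
  (∃ e ∈ t.B v, (t.ends e).2 = l) ∧ ∀ e ∈ t.B v, t.pre l ≤ t.pre (t.ends e).2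

/-- `v` and `w` have the same `M`-value. -/
def SameM (v w : V) : Prop := ∃ m, t.IsM v m ∧ t.IsM w m

/-- `n = nextM(v)`: the greatest vertex smaller than `v` with the same `M`-value. -/
def IsNextM (v n : V) : Prop :=
  t.pre n < t.pre v ∧ t.SameM v n ∧
    ∀ z, t.pre z < t.pre v → t.SameM v z → t.pre z ≤ t.pre n

/-- `l = lastM(v)`: the smallest vertex with the same `M`-value as `v`. -/
def IsLastM (v l : V) : Prop :=
  t.SameM v l ∧ ∀ z, t.SameM v z → t.pre l ≤ t.pre z

/-- `t` really is a DFS spanning tree of the connected multigraph `ends`. -/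
structure IsDFS : Prop where
  conn : Connected t.ends
  parent_root : t.parent t.root = t.root
  tree_ends : ∀ v, v ≠ t.root → t.ends (t.treeEdge v) = (v, t.parent v)
  treeEdge_inj : ∀ v w, v ≠ t.root → w ≠ t.root → t.treeEdge v = t.treeEdge w → v = w
  back : ∀ e, ¬ t.IsTreeEdge e → t.Anc (t.ends e).2 (t.ends e).1
  pre_inj : Function.Injective t.pre
  pre_mono : ∀ a b, t.Anc a b → t.pre a ≤ t.pre b
  pre_interval : ∀ a b : V,
    t.pre a ≤ t.pre b → t.pre b < t.pre a + {x | t.Anc a x}.ncard → t.Anc a b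

end DFSTree

/-! Deleting the tree edge above `v` separates the subtree of `v` from the rest exactly when no
back-edge leaves that subtree, i.e. when `B(v)` is empty: the descendants of `v` are then closed
under every remaining edge. Conversely, if every `B(w)` is nonempty, then after deleting any single
edge each vertex still climbs to the root, either along its tree edge or, when that edge is the
deleted one, down its subtree and up a back-edge in `B(w)` to a vertex of smaller preorder. -/

theorem Reach.symm {ends : E → V × V} {S : Set E} {a b : V} (h : Reach ends S a b) :
    Reach ends S b a := by
  induction h with
  | refl => exact Relation.ReflTransGen.refl
  | tail _ hstep ih =>
    obtain ⟨e, he, hends⟩ := hstep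
    exact Relation.ReflTransGen.head ⟨e, he, hends.symm⟩ ih

theorem Reach.mono {ends : E → V × V} {S T : Set E} (hST : S ⊆ T) {a b : V}
    (h : Reach ends T a b) : Reach ends S a b := by
  induction h with
  | refl => exact Relation.ReflTransGen.refl
  | tail _ hstep ih =>
    obtain ⟨e, he, hends⟩ := hstep
    exact ih.tail ⟨e, fun h => he (hST h), hends⟩

theorem Reach.of_closed {ends : E → V × V} {S : Set E} {P : V → Prop}
    (hP : ∀ e ∉ S, P (ends e).1 ↔ P (ends e).2) {a b : V} (h : Reach ends S a b) (ha : P a) :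
    P b := by
  induction h with
  | refl => exact ha
  | tail _ hstep ih =>
    obtain ⟨e, he, hends | hends⟩ := hstep <;> have hPe := hP e he <;> rw [hends] at hPe
    · exact hPe.1 ih
    · exact hPe.2 ih

namespace DFSTree

variable {t : DFSTree V E}

theorem anc_refl (a : V) : t.Anc a a := Relation.ReflTransGen.refl

theorem Anc.trans {a b c : V} (hab : t.Anc a b) (hbc : t.Anc b c) : t.Anc a c :=
  Relation.ReflTransGen.trans hbc hab

theorem anc_parent {v : V} (hv : v ≠ t.root) : t.Anc (t.parent v) v :=
  Relation.ReflTransGen.single ⟨hv, rfl⟩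

theorem eq_root_of_anc_root {v : V} (h : t.Anc v t.root) : v = t.root := by
  rcases Relation.ReflTransGen.cases_head h with h | ⟨_, hstep, _⟩
  · exact h.symm
  · exact absurd rfl hstep.1

theorem Anc.anc_parent_of_ne {u v : V} (h : t.Anc v u) (hne : u ≠ v) :
    t.Anc v (t.parent u) := by
  rcases Relation.ReflTransGen.cases_head h with h | ⟨_, hstep, hrest⟩
  · exact absurd h hne
  · rwa [← hstep.2]

theorem Anc.total {a b x : V} (ha : t.Anc a x) (hb : t.Anc b x) : t.Anc a b ∨ t.Anc b a :=
  (Relation.ReflTransGen.total_of_right_unique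
    (fun _ _ _ h₁ h₂ => h₁.2.trans h₂.2.symm) ha hb).symm

theorem notMem_B_root (e : E) : e ∉ t.B t.root :=
  fun he => he.2.2.2 (eq_root_of_anc_root he.2.2.1)

variable (ht : t.IsDFS)
include ht

theorem anc_fst_iff_anc_snd {v : V} {e : E} (hv : v ≠ t.root → e ≠ t.treeEdge v)
    (heB : e ∉ t.B v) : t.Anc v (t.ends e).1 ↔ t.Anc v (t.ends e).2 := by
  by_cases hte : t.IsTreeEdge e
  · obtain ⟨u, hu, rfl⟩ := hte
    rw [ht.tree_ends u hu]
    refine ⟨fun h => h.anc_parent_of_ne ?_, fun h => h.trans (anc_parent hu)⟩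
    rintro rfl
    exact hv hu rfl
  · have hback := ht.back e hte
    refine ⟨fun h => ?_, fun h => h.trans hback⟩
    rcases h.total hback with h' | h'
    · exact h'
    · by_contra hne
      exact heB ⟨hte, h, h', fun heq => hne (by rw [heq]; exact anc_refl v)⟩

theorem root_anc (w : V) : t.Anc t.root w :=
  (ht.conn t.root w).of_closed
    (fun _ _ => anc_fst_iff_anc_snd ht (fun h => absurd rfl h) (notMem_B_root _)) (anc_refl _)

theorem parent_ne_self {w : V} (hw : w ≠ t.root) : t.parent w ≠ w := by
  intro hfix
  have hstuck : ∀ a, t.Anc a w → a = w := by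
    intro a h
    induction h with
    | refl => rfl
    | tail _ hstep ih => rw [hstep.2, ih, hfix]
  exact hw (hstuck _ (root_anc ht w)).symm

theorem pre_lt_of_anc {a b : V} (h : t.Anc a b) (hne : a ≠ b) : t.pre a < t.pre b :=
  lt_of_le_of_ne (ht.pre_mono a b h) (fun heq => hne (ht.pre_inj heq))

theorem pre_parent_lt {w : V} (hw : w ≠ t.root) : t.pre (t.parent w) < t.pre w :=
  pre_lt_of_anc ht (anc_parent hw) (parent_ne_self ht hw)

theorem reach_parent {S : Set E} {w : V} (hw : w ≠ t.root) (hS : t.treeEdge w ∉ S) :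
    Reach t.ends S w (t.parent w) :=
  Relation.ReflTransGen.single ⟨t.treeEdge w, hS, Or.inl (ht.tree_ends w hw)⟩

theorem reach_of_anc {w x : V} (hw : w ≠ t.root) (h : t.Anc w x) :
    Reach t.ends {t.treeEdge w} x w := by
  induction h using Relation.ReflTransGen.head_induction_on with
  | refl => exact Relation.ReflTransGen.refl
  | @head a c hstep hrest ih =>
    have haw : a ≠ w := by
      rintro rfl
      have : t.pre a ≤ t.pre c := ht.pre_mono _ _ hrest
      have := pre_parent_lt ht hstep.1
      rw [← hstep.2] at this
      omega
    refine Relation.ReflTransGen.trans ?_ ih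
    rw [hstep.2]
    exact reach_parent ht hstep.1 fun h => haw (ht.treeEdge_inj a w hstep.1 hw h)

theorem anc_of_reach_of_B_eq_empty {v x : V} (hB : t.B v = ∅)
    (h : Reach t.ends {t.treeEdge v} v x) : t.Anc v x :=
  h.of_closed (fun _ he => anc_fst_iff_anc_snd ht (fun _ => he) (by simp [hB]))
    (anc_refl v)

theorem reach_root_of_B_nonempty (hB : ∀ v, v ≠ t.root → (t.B v).Nonempty) (e : E) (w : V) :
    Reach t.ends {e} w t.root := by
  induction hpre : t.pre w using Nat.strong_induction_on generalizing w with
  | _ n ih =>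
    subst hpre
    by_cases hwr : w = t.root
    · exact hwr ▸ Relation.ReflTransGen.refl
    by_cases hte : t.treeEdge w = e
    · obtain ⟨f, hf⟩ := hB w hwr
      have hfe : f ≠ e := fun hfe => hf.1 ⟨w, hwr, hfe.trans hte.symm⟩
      have hdown : Reach t.ends {e} w (t.ends f).1 := hte ▸ (reach_of_anc ht hwr hf.2.1).symm
      have hback : Reach t.ends {e} (t.ends f).1 (t.ends f).2 :=
        Relation.ReflTransGen.single ⟨f, hfe, Or.inl rfl⟩
      exact (hdown.trans hback).trans
        (ih _ (pre_lt_of_anc ht hf.2.2.1 hf.2.2.2) _ rfl)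
    · exact (reach_parent ht hwr hte).trans (ih _ (pre_parent_lt ht hwr) _ rfl)

end DFSTree

open DFSTree in
/-- A connected graph with DFS tree `t` rooted at `r` is 2-edge-connected iff
`B(v)` is nonempty for every vertex `v ≠ r`. -/
theorem two_edge_connected_iff_B_nonempty (t : DFSTree V E) (ht : t.IsDFS) :
    GraphKConn t.ends 2 ↔ ∀ v : V, v ≠ t.root → (t.B v).Nonempty := by
  constructor
  · intro h2 v hv
    by_contra hB
    have hreach := h2 {t.treeEdge v} (by simp) v t.root
    rw [Finset.coe_singleton] at hreach
    exact hv (eq_root_of_anc_root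
      (anc_of_reach_of_B_eq_empty ht (Set.not_nonempty_iff_eq_empty.mp hB) hreach))
  · intro hB S hS u v
    rcases S.eq_empty_or_nonempty with rfl | ⟨e, he⟩
    · simpa using ht.conn u v
    have hSe : (S : Set E) ⊆ {e} := fun x hx =>
      Finset.card_le_one.mp (by omega) x hx e he
    exact Reach.mono hSe ((reach_root_of_B_nonempty ht hB e u).trans
      (reach_root_of_B_nonempty ht hB e v).symm)
end

section
/- Let T be a DFS tree of a connected graph G, let v be an ancestor of u in T, and suppose M(v) is a descendant of u. Then B(v) ⊆ B(u); in particular, M(v) is a descendant of M(u). -/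
variable {V E : Type}

/-!
A back-edge of `B(v)` starts below `M(v)`, hence below `u`, and ends strictly above `v`, hence
strictly above `u`; so it lies in `B(u)`. The nearest common ancestor is antitone in the set of
vertices, so the larger set of lower ends defining `M(u)` gives an ancestor of `M(v)`.
-/

namespace DFSTree

variable {t : DFSTree V E}

theorem IsDFS.anc_antisymm (ht : t.IsDFS) {a b : V} (hab : t.Anc a b) (hba : t.Anc b a) :
    a = b :=
  ht.pre_inj (le_antisymm (ht.pre_mono a b hab) (ht.pre_mono b a hba))

theorem IsDFS.properAnc_of_properAnc_of_anc (ht : t.IsDFS) {a b c : V} (hab : t.ProperAnc a b)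
    (hbc : t.Anc b c) : t.ProperAnc a c := by
  refine ⟨hab.1.trans hbc, fun hac => hab.2 ?_⟩
  subst hac
  exact ht.anc_antisymm hab.1 hbc

theorem IsDFS.B_subset_B (ht : t.IsDFS) {u v : V} (hvu : t.Anc v u)
    (hlow : ∀ e ∈ t.B v, t.Anc u (t.ends e).1) : t.B v ⊆ t.B u := fun e he =>
  ⟨he.1, hlow e he, ht.properAnc_of_properAnc_of_anc he.2.2 hvu⟩

theorem IsNCA.anc_of_subset {S T : Set V} {m n : V} (hm : t.IsNCA S m) (hn : t.IsNCA T n)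
    (hST : S ⊆ T) : t.Anc n m :=
  hm.2 n fun x hx => hn.1 x (hST hx)

theorem IsM.anc_of_B_subset {u v mu mv : V} (hMu : t.IsM u mu) (hMv : t.IsM v mv)
    (hB : t.B v ⊆ t.B u) : t.Anc mu mv :=
  hMv.anc_of_subset hMu fun _ ⟨e, he, hx⟩ => ⟨e, hB he, hx⟩

end DFSTree

/-- If `v` is an ancestor of `u` and `M(v)` is a descendant of `u`, then
`B(v) ⊆ B(u)`; in particular `M(v)` is a descendant of `M(u)`. -/
theorem B_subset_of_M_descendant (t : DFSTree V E) (ht : t.IsDFS)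
    (u v mu mv : V) (hvu : t.Anc v u)
    (hMu : t.IsM u mu) (hMv : t.IsM v mv) (hdesc : t.Anc u mv) :
    t.B v ⊆ t.B u ∧ t.Anc mu mv := by
  have hB : t.B v ⊆ t.B u :=
    ht.B_subset_B hvu fun e he => hdesc.trans (hMv.1 _ ⟨e, he, rfl⟩)
  exact ⟨hB, hMu.anc_of_B_subset hMv hB⟩
end

section
/- In a 3-edge-connected graph G with DFS tree T, for any two tree-edges (u,p(u)) and (v,p(v)) there is at most one vertex w such that {(u,p(u)), (v,p(v)), (w,p(w))} is a 3-edge cut of G. -/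
variable {V E : Type}

/-! A 3-edge cut `{f, g, e}` is crossed by each of its edges, i.e. it is exactly the set `δ(X)` of
edges leaving a side `X`. If `{f, g, e'}` with `e ≠ e'` were another one, with side `Y`, then the
edges crossing `X Δ Y` would be `δ(X) Δ δ(Y) = {e, e'}`; in a 3-edge-connected graph a set crossed
by at most two edges is crossed by none, yet `e` crosses `X` and not `Y`. -/

section CutSide

variable {ends : E → V × V}

def Cross (ends : E → V × V) (P : V → Prop) (e : E) : Prop :=
  ¬ (P (ends e).1 ↔ P (ends e).2)

lemma cross_iff_not_iff {X Y : V → Prop} {e : E} :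
    Cross ends (fun x => X x ↔ Y x) e ↔ ¬ (Cross ends X e ↔ Cross ends Y e) := by
  unfold Cross
  tauto

lemma Reach.imp_of_forall_not_cross {S : Set E} {P : V → Prop}
    (hP : ∀ e ∉ S, ¬ Cross ends P e) {a b : V} (hab : Reach ends S a b) (ha : P a) : P b := by
  induction hab with
  | refl => exact ha
  | tail _ hstep ih =>
      obtain ⟨e, he, hends⟩ := hstep
      have := not_not.mp (hP e he)
      rcases hends with h | h <;> rw [h] at this <;> tauto

lemma not_cross_reach {S : Set E} {a : V} {e : E} (he : e ∉ S) :
    ¬ Cross ends (Reach ends S a) e := fun h =>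
  h ⟨fun hx => hx.tail ⟨e, he, .inl rfl⟩, fun hx => hx.tail ⟨e, he, .inr rfl⟩⟩

lemma GraphKConn.not_cross_of_card_lt {k : ℕ} (hk : GraphKConn ends k) {S : Finset E}
    (hS : S.card < k) {P : V → Prop} (hP : ∀ e ∉ S, ¬ Cross ends P e) (e : E) :
    ¬ Cross ends P e := fun h =>
  h ⟨(hk S hS _ _).imp_of_forall_not_cross hP, (hk S hS _ _).imp_of_forall_not_cross hP⟩

lemma GraphKConn.cross_reach_of_not_reach [DecidableEq E] {k : ℕ} (hk : GraphKConn ends k)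
    {S : Finset E} (hS : S.card ≤ k) {a b : V} (hab : ¬ Reach ends S a b) {e : E} (he : e ∈ S) :
    Cross ends (Reach ends S a) e := by
  by_contra hcross
  have hP : ∀ d ∉ S.erase e, ¬ Cross ends (Reach ends S a) d := by
    intro d hd
    by_cases hde : d = e
    · exact hde ▸ hcross
    · exact not_cross_reach (by simpa [hde] using hd)
  exact hab ((hk _ ((Finset.card_erase_lt_of_mem he).trans_le hS) a b).imp_of_forall_not_cross hP .refl)

lemma GraphKConn.ne_of_not_reach_triple (h3 : GraphKConn ends 3) {f g e : E} {a b : V}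
    (hab : ¬ Reach ends {f, g, e} a b) : e ≠ f ∧ e ≠ g := by
  classical
  have hpair : ({f, g, e} : Set E) ≠ ↑({f, g} : Finset E) := fun h =>
    hab (h ▸ h3 _ (Finset.card_le_two.trans_lt (by norm_num)) a b)
  constructor <;> rintro rfl <;> simp [Set.pair_comm] at hpair

lemma GraphKConn.eq_of_isCutSet_triples (h3 : GraphKConn ends 3) {f g e e' : E}
    (hc : IsCutSet ends {f, g, e}) (hc' : IsCutSet ends {f, g, e'}) : e = e' := by
  classical
  by_contra hne
  obtain ⟨a, b, hab⟩ := hc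
  obtain ⟨a', b', hab'⟩ := hc'
  obtain ⟨hef, heg⟩ := h3.ne_of_not_reach_triple hab
  set S : Finset E := {f, g, e}
  set S' : Finset E := {f, g, e'}
  replace hab : ¬ Reach ends S a b := by simpa [S] using hab
  replace hab' : ¬ Reach ends S' a' b' := by simpa [S'] using hab'
  set X := Reach ends S a
  set Y := Reach ends S' a'
  have hZ : ∀ d ∉ ({e, e'} : Finset E), ¬ Cross ends (fun x => X x ↔ Y x) d := by
    intro d hd
    rw [cross_iff_not_iff, not_not]
    by_cases hfg : d = f ∨ d = g
    · exact iff_of_true (h3.cross_reach_of_not_reach Finset.card_le_three hab (by grind))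
        (h3.cross_reach_of_not_reach Finset.card_le_three hab' (by grind))
    · exact iff_of_false (not_cross_reach (by grind)) (not_cross_reach (by grind))
  have hZe := h3.not_cross_of_card_lt (Finset.card_le_two.trans_lt (by norm_num)) hZ e
  rw [cross_iff_not_iff, not_not] at hZe
  exact not_cross_reach (by grind)
    (hZe.mp (h3.cross_reach_of_not_reach Finset.card_le_three hab (by simp)))

end CutSide

theorem unique_third_tree_edge_general (t : DFSTree V E) (ht : t.IsDFS)
    (h3 : GraphKConn t.ends 3) (u v : V) :
    ∀ w w' : V, w ≠ t.root → w' ≠ t.root →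
      IsCutSet t.ends {t.treeEdge u, t.treeEdge v, t.treeEdge w} →
      IsCutSet t.ends {t.treeEdge u, t.treeEdge v, t.treeEdge w'} → w = w' :=
  fun w w' hw hw' hc hc' => ht.treeEdge_inj w w' hw hw' (h3.eq_of_isCutSet_triples hc hc')

/-- For any two tree edges `(u, p(u))` and `(v, p(v))` of a 3-edge-connected graph,
there is at most one vertex `w` such that `{(u, p(u)), (v, p(v)), (w, p(w))}` is a
3-edge cut. -/
theorem unique_third_tree_edge (t : DFSTree V E) (ht : t.IsDFS)
    (h3 : GraphKConn t.ends 3) (u v : V)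
    (hu : u ≠ t.root) (hv : v ≠ t.root) :
    ∀ w w' : V, w ≠ t.root → w' ≠ t.root →
      IsCutSet t.ends {t.treeEdge u, t.treeEdge v, t.treeEdge w} →
      IsCutSet t.ends {t.treeEdge u, t.treeEdge v, t.treeEdge w'} → w = w' :=
  unique_third_tree_edge_general t ht h3 u v
end
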